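/- Let h : X → ℝ^D be bounded measurable and suppose that for all probability measures μ ≠ ν on X the function h is separable for (μ, ν) and h is injective. Then FM*_h(μ, ν) := ‖E_μ[h] − E_ν[h]‖₂ defines a metric on probability measures on X: nonnegativity, symmetry, triangle inequality, and FM*_h(μ,ν) = 0 ⟺ μ = ν. -/

import Mathlib

open MeasureTheory Set
open scoped InnerProductSpace

noncomputable def cdf (μ : Measure ℝ) (ξ : ℝ) : ℝ := (μ (Set.Iic ξ)).toReal

/-- `h` is separable for `(μ, ν)`: along the normalized difference of mean embeddings
`ω*`, the CDF of `⟨ω*, h⟩_♯μ` lies below that of `⟨ω*, h⟩_♯ν` everywhere. -/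
def Separable {X : Type*} [MeasurableSpace X] {D : ℕ}
    (h : X → EuclideanSpace ℝ (Fin D)) (μ ν : Measure X) : Prop :=
  ∀ ξ : ℝ,
    cdf (Measure.map (fun x =>
      ⟪(‖(∫ x, h x ∂μ) - ∫ x, h x ∂ν‖⁻¹ • ((∫ x, h x ∂μ) - ∫ x, h x ∂ν) :
          EuclideanSpace ℝ (Fin D)), h x⟫_ℝ) μ) ξ ≤
    cdf (Measure.map (fun x =>
      ⟪(‖(∫ x, h x ∂μ) - ∫ x, h x ∂ν‖⁻¹ • ((∫ x, h x ∂μ) - ∫ x, h x ∂ν) :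
          EuclideanSpace ℝ (Fin D)), h x⟫_ℝ) ν) ξ

/-!
If `μ` and `ν` have the same mean embedding, mix them with the same weight `1 - t` with
probability measures `α` and `β`: the mean embeddings of the mixtures differ by
`(1 - t) (E_α[h] - E_β[h])`, so separability of that pair compares the CDFs of `μ` and `ν` along
the normalized direction of `E_α[h] - E_β[h]` up to an error `O(1 - t)`. Letting `t → 1` and
swapping `μ, ν` shows that `⟨u, h⟩_♯μ = ⟨u, h⟩_♯ν` along all these directions, which (taking
`α`, `β` finitely supported) exhaust the span `V` of the differences `h a - h b`; orthogonally to
`V` the function `⟨w, h⟩` is constant. Hence `h_♯μ` and `h_♯ν` have the same one-dimensional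
projections, so the same characteristic function (Cramér–Wold), and `μ = ν` since `h` is a
measurable embedding of the standard Borel space `X`. The other metric axioms are those of the norm.
-/

open Filter Topology NormedSpace

namespace MeasureTheory.Measure

variable {X : Type*} [MeasurableSpace X]

noncomputable def mixture (t : ℝ) (μ α : Measure X) : Measure X :=
  ENNReal.ofReal t • μ + ENNReal.ofReal (1 - t) • α

variable {t : ℝ} {μ α : Measure X}

lemma isProbabilityMeasure_mixture (ht0 : 0 ≤ t) (ht1 : t ≤ 1) [IsProbabilityMeasure μ]
    [IsProbabilityMeasure α] : IsProbabilityMeasure (mixture t μ α) := by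
  constructor
  simp only [mixture, add_apply, smul_apply, measure_univ, smul_eq_mul, mul_one]
  rw [← ENNReal.ofReal_add ht0 (sub_nonneg.2 ht1), add_sub_cancel, ENNReal.ofReal_one]

lemma integral_mixture {E : Type*} [NormedAddCommGroup E] [NormedSpace ℝ E] {f : X → E}
    (ht0 : 0 ≤ t) (ht1 : t ≤ 1) (hμ : Integrable f μ) (hα : Integrable f α) :
    ∫ x, f x ∂mixture t μ α = t • ∫ x, f x ∂μ + (1 - t) • ∫ x, f x ∂α := by
  rw [mixture, integral_add_measure (hμ.smul_measure ENNReal.ofReal_ne_top)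
    (hα.smul_measure ENNReal.ofReal_ne_top), integral_smul_measure, integral_smul_measure,
    ENNReal.toReal_ofReal ht0, ENNReal.toReal_ofReal (sub_nonneg.2 ht1)]

lemma cdf_map_mixture [IsFiniteMeasure μ] [IsFiniteMeasure α] {f : X → ℝ} (hf : Measurable f)
    (ht0 : 0 ≤ t) (ht1 : t ≤ 1) (ξ : ℝ) :
    cdf ((mixture t μ α).map f) ξ = t * cdf (μ.map f) ξ + (1 - t) * cdf (α.map f) ξ := by
  simp only [cdf, ← measureReal_def, map_measureReal_apply hf measurableSet_Iic, mixture]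
  rw [measureReal_add_apply (ENNReal.mul_ne_top ENNReal.ofReal_ne_top (measure_ne_top _ _))
      (ENNReal.mul_ne_top ENNReal.ofReal_ne_top (measure_ne_top _ _)),
    measureReal_ennreal_smul_apply, measureReal_ennreal_smul_apply, ENNReal.toReal_ofReal ht0,
    ENNReal.toReal_ofReal (sub_nonneg.2 ht1)]

lemma map_comp_eq_of_map_eq {X Y Z : Type*} [MeasurableSpace X] [MeasurableSpace Y]
    [MeasurableSpace Z] {μ ν : Measure X} {f : X → Y} {g : Y → Z} (hg : Measurable g)
    (hf : Measurable f) (h : μ.map f = ν.map f) : μ.map (g ∘ f) = ν.map (g ∘ f) := by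
  rw [← map_map hg hf, ← map_map hg hf, h]

theorem ext_of_map_inner {E : Type*} [NormedAddCommGroup E] [InnerProductSpace ℝ E]
    [CompleteSpace E] [MeasurableSpace E] [BorelSpace E] [SecondCountableTopology E]
    {μ ν : Measure E} [IsFiniteMeasure μ] [IsFiniteMeasure ν]
    (h : ∀ w : E, μ.map (fun y => ⟪w, y⟫_ℝ) = ν.map (fun y => ⟪w, y⟫_ℝ)) : μ = ν := by
  refine ext_of_charFunDual (funext fun L => ?_)
  have hL : ⇑L = fun y => ⟪(InnerProductSpace.toDual ℝ E).symm L, y⟫_ℝ :=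
    funext fun y => (InnerProductSpace.toDual_symm_apply).symm
  rw [charFunDual_eq_charFun_map_one, charFunDual_eq_charFun_map_one, hL, h]

end MeasureTheory.Measure

lemma le_of_forall_mix_le {a b c d : ℝ}
    (h : ∀ t, 0 < t → t < 1 → t * a + (1 - t) * b ≤ t * c + (1 - t) * d) : a ≤ c := by
  have hlim : ∀ x y : ℝ, Tendsto (fun t => t * x + (1 - t) * y) (𝓝[<] 1) (𝓝 x) := by
    intro x y
    have hcont : Continuous fun t : ℝ => t * x + (1 - t) * y := by fun_prop
    simpa using (hcont.tendsto 1).mono_left nhdsWithin_le_nhds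
  exact le_of_tendsto_of_tendsto (hlim a b) (hlim c d)
    (eventually_of_mem (Ioo_mem_nhdsLT zero_lt_one) fun t ht => h t ht.1 ht.2)

lemma measure_eq_of_cdf_eq {μ ν : Measure ℝ} [IsFiniteMeasure μ] [IsFiniteMeasure ν]
    (h : ∀ ξ, cdf μ ξ = cdf ν ξ) : μ = ν :=
  Measure.ext_of_Iic μ ν fun ξ =>
    (ENNReal.toReal_eq_toReal_iff' (measure_ne_top _ _) (measure_ne_top _ _)).1 (h ξ)

section WeightedDirac

variable {X ι : Type*} [MeasurableSpace X] [Fintype ι] {w : ι → ℝ}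

lemma isProbabilityMeasure_sum_smul_dirac (hw : ∀ i, 0 ≤ w i) (hw1 : ∑ i, w i = 1)
    (P : ι → X) : IsProbabilityMeasure (∑ i, ENNReal.ofReal (w i) • Measure.dirac (P i)) := by
  constructor
  simp only [Measure.coe_finsetSum, Finset.sum_apply, Measure.smul_apply, measure_univ,
    smul_eq_mul, mul_one]
  rw [← ENNReal.ofReal_sum_of_nonneg fun i _ => hw i, hw1, ENNReal.ofReal_one]

lemma integral_sum_smul_dirac {E : Type*} [NormedAddCommGroup E] [NormedSpace ℝ E]
    [CompleteSpace E] {f : X → E} (hf : StronglyMeasurable f) (hw : ∀ i, 0 ≤ w i) (P : ι → X) :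
    ∫ x, f x ∂(∑ i, ENNReal.ofReal (w i) • Measure.dirac (P i)) = ∑ i, w i • f (P i) := by
  rw [integral_finsetSum_measure fun i _ =>
    (integrable_dirac' hf enorm_lt_top).smul_measure ENNReal.ofReal_ne_top]
  simp only [integral_smul_measure, integral_dirac' f _ hf, ENNReal.toReal_ofReal (hw _)]

end WeightedDirac

lemma exists_pos_smul_integral_sub_integral {X E : Type*} [MeasurableSpace X]
    [NormedAddCommGroup E] [NormedSpace ℝ E] [CompleteSpace E] {h : X → E}
    (hh : StronglyMeasurable h) {v : E}
    (hv : v ∈ Submodule.span ℝ {y | ∃ a b, y = h a - h b}) (hv0 : v ≠ 0) :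
    ∃ (α β : Measure X), IsProbabilityMeasure α ∧ IsProbabilityMeasure β ∧
      ∃ r : ℝ, 0 < r ∧ v = r • ((∫ x, h x ∂α) - ∫ x, h x ∂β) := by
  obtain ⟨n, c, g, hsum⟩ := Submodule.mem_span_set'.1 hv
  choose p q hpq using fun i => (g i).2
  -- flip the differences with negative coefficients, so that all weights `|c i|` are nonnegative
  set A : Fin n → X := fun i => if 0 ≤ c i then p i else q i
  set B : Fin n → X := fun i => if 0 ≤ c i then q i else p i
  have hAB : ∀ i, |c i| • (h (A i) - h (B i)) = c i • (g i : E) := by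
    intro i
    by_cases hci : 0 ≤ c i
    · simp [A, B, hci, abs_of_nonneg, hpq i]
    · simp only [A, B, hci, if_false, abs_of_neg (not_le.1 hci), hpq i, neg_smul, ← smul_neg,
        neg_sub]
  set S := ∑ i, |c i|
  have hS : 0 < S := by
    refine (Finset.sum_nonneg fun i _ => abs_nonneg (c i)).lt_of_ne fun hS0 => hv0 ?_
    rw [← hsum]
    refine Finset.sum_eq_zero fun i _ => ?_
    rw [abs_eq_zero.1 ((Finset.sum_eq_zero_iff_of_nonneg fun i _ => abs_nonneg (c i)).1
      hS0.symm i (Finset.mem_univ i)), zero_smul]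
  have hw : ∀ i, 0 ≤ |c i| / S := fun i => div_nonneg (abs_nonneg _) hS.le
  have hw1 : ∑ i, |c i| / S = 1 := by rw [← Finset.sum_div, div_self hS.ne']
  refine ⟨_, _, isProbabilityMeasure_sum_smul_dirac hw hw1 A,
    isProbabilityMeasure_sum_smul_dirac hw hw1 B, S, hS, ?_⟩
  rw [integral_sum_smul_dirac hh hw, integral_sum_smul_dirac hh hw, ← Finset.sum_sub_distrib,
    Finset.smul_sum, ← hsum]
  refine Finset.sum_congr rfl fun i _ => ?_
  rw [← smul_sub, smul_smul, mul_div_cancel₀ _ hS.ne', hAB]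

section Separable

variable {X : Type*} [MeasurableSpace X] {D : ℕ} {h : X → EuclideanSpace ℝ (Fin D)}

variable (h) in
def SeparablePairwise : Prop :=
  ∀ μ ν : Measure X, IsProbabilityMeasure μ → IsProbabilityMeasure ν → μ ≠ ν → Separable h μ ν

lemma separable_iff {μ ν : Measure X} : Separable h μ ν ↔ ∀ ξ,
    cdf (μ.map fun x => ⟪normalize ((∫ x, h x ∂μ) - ∫ x, h x ∂ν), h x⟫_ℝ) ξ ≤
      cdf (ν.map fun x => ⟪normalize ((∫ x, h x ∂μ) - ∫ x, h x ∂ν), h x⟫_ℝ) ξ :=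
  Iff.rfl

variable {C : ℝ} {μ ν : Measure X} [IsProbabilityMeasure μ] [IsProbabilityMeasure ν]

lemma cdf_map_inner_normalize_le (hm : Measurable h) (hb : ∀ x, ‖h x‖ ≤ C)
    (hsep : SeparablePairwise h) (hμν : ∫ x, h x ∂μ = ∫ x, h x ∂ν) {α β : Measure X}
    [IsProbabilityMeasure α] [IsProbabilityMeasure β] (hαβ : ∫ x, h x ∂α ≠ ∫ x, h x ∂β) (ξ : ℝ) :
    cdf (μ.map fun x => ⟪normalize ((∫ x, h x ∂α) - ∫ x, h x ∂β), h x⟫_ℝ) ξ ≤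
      cdf (ν.map fun x => ⟪normalize ((∫ x, h x ∂α) - ∫ x, h x ∂β), h x⟫_ℝ) ξ := by
  set d := (∫ x, h x ∂α) - ∫ x, h x ∂β
  have hint : ∀ (ρ : Measure X) [IsFiniteMeasure ρ], Integrable h ρ := fun ρ _ =>
    Integrable.of_bound hm.aestronglyMeasurable C (Eventually.of_forall hb)
  set f : X → ℝ := fun x => ⟪normalize d, h x⟫_ℝ
  have hf : Measurable f := by fun_prop
  refine le_of_forall_mix_le (b := cdf (α.map f) ξ) (d := cdf (β.map f) ξ) fun t ht0 ht1 => ?_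
  have := Measure.isProbabilityMeasure_mixture (μ := μ) (α := α) ht0.le ht1.le
  have := Measure.isProbabilityMeasure_mixture (μ := ν) (α := β) ht0.le ht1.le
  have hdiff : (∫ x, h x ∂Measure.mixture t μ α) - ∫ x, h x ∂Measure.mixture t ν β =
      (1 - t) • d := by
    rw [Measure.integral_mixture ht0.le ht1.le (hint μ) (hint α),
      Measure.integral_mixture ht0.le ht1.le (hint ν) (hint β), hμν]
    module
  have hne : Measure.mixture t μ α ≠ Measure.mixture t ν β := by
    intro heq
    rw [heq, sub_self, eq_comm] at hdiff
    exact smul_ne_zero (sub_ne_zero.2 ht1.ne') (sub_ne_zero.2 hαβ) hdiff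
  have hsepξ := separable_iff.1 (hsep _ _ ‹_› ‹_› hne) ξ
  rwa [hdiff, normalize_smul_of_pos (sub_pos.2 ht1), Measure.cdf_map_mixture hf ht0.le ht1.le,
    Measure.cdf_map_mixture hf ht0.le ht1.le] at hsepξ

lemma map_inner_normalize_eq (hm : Measurable h) (hb : ∀ x, ‖h x‖ ≤ C)
    (hsep : SeparablePairwise h) (hμν : ∫ x, h x ∂μ = ∫ x, h x ∂ν) {α β : Measure X}
    [IsProbabilityMeasure α] [IsProbabilityMeasure β] (hαβ : ∫ x, h x ∂α ≠ ∫ x, h x ∂β) :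
    μ.map (fun x => ⟪normalize ((∫ x, h x ∂α) - ∫ x, h x ∂β), h x⟫_ℝ) =
      ν.map (fun x => ⟪normalize ((∫ x, h x ∂α) - ∫ x, h x ∂β), h x⟫_ℝ) :=
  measure_eq_of_cdf_eq fun ξ => le_antisymm
    (cdf_map_inner_normalize_le hm hb hsep hμν hαβ ξ)
    (cdf_map_inner_normalize_le hm hb hsep hμν.symm hαβ ξ)

lemma map_inner_eq_of_mem_span (hm : Measurable h) (hb : ∀ x, ‖h x‖ ≤ C)
    (hsep : SeparablePairwise h) (hμν : ∫ x, h x ∂μ = ∫ x, h x ∂ν) {v : EuclideanSpace ℝ (Fin D)}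
    (hv : v ∈ Submodule.span ℝ {y | ∃ a b, y = h a - h b}) :
    μ.map (fun x => ⟪v, h x⟫_ℝ) = ν.map (fun x => ⟪v, h x⟫_ℝ) := by
  rcases eq_or_ne v 0 with rfl | hv0
  · simp only [inner_zero_left, Measure.map_const, measure_univ]
  obtain ⟨α, β, _, _, r, hr, rfl⟩ := exists_pos_smul_integral_sub_integral hm.stronglyMeasurable
    hv hv0
  set d := (∫ x, h x ∂α) - ∫ x, h x ∂β
  have hd : d ≠ 0 := right_ne_zero_of_smul hv0
  have hscale : (fun x => ⟪r • d, h x⟫_ℝ) =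
      (fun s => (r * ‖d‖) * s) ∘ fun x => ⟪normalize d, h x⟫_ℝ := by
    funext x
    rw [Function.comp_apply, ← real_inner_smul_left, mul_smul, norm_smul_normalize]
  rw [hscale]
  exact Measure.map_comp_eq_of_map_eq (measurable_const_mul _) (by fun_prop)
    (map_inner_normalize_eq hm hb hsep hμν (sub_ne_zero.1 hd))

lemma map_inner_eq_of_integral_eq (hm : Measurable h) (hb : ∀ x, ‖h x‖ ≤ C)
    (hsep : SeparablePairwise h) (hμν : ∫ x, h x ∂μ = ∫ x, h x ∂ν) (w : EuclideanSpace ℝ (Fin D)) :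
    μ.map (fun x => ⟪w, h x⟫_ℝ) = ν.map (fun x => ⟪w, h x⟫_ℝ) := by
  obtain ⟨x₀⟩ := nonempty_of_isProbabilityMeasure μ
  set V := Submodule.span ℝ {y | ∃ a b, y = h a - h b}
  -- the component of `w` orthogonal to `V` contributes a constant to `⟪w, h x⟫`
  set c := ⟪w - V.starProjection w, h x₀⟫_ℝ
  have hsplit : (fun x => ⟪w, h x⟫_ℝ) = (· + c) ∘ fun x => ⟪V.starProjection w, h x⟫_ℝ := by
    funext x
    have horth :=
      V.starProjection_inner_eq_zero w (h x - h x₀) (Submodule.subset_span ⟨x, x₀, rfl⟩)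
    simp only [Function.comp_apply, c, inner_sub_left, inner_sub_right] at horth ⊢
    linarith
  rw [hsplit]
  exact Measure.map_comp_eq_of_map_eq (measurable_add_const c) (by fun_prop)
    (map_inner_eq_of_mem_span hm hb hsep hμν (V.starProjection_apply_mem w))

lemma map_eq_of_integral_eq (hm : Measurable h) (hb : ∀ x, ‖h x‖ ≤ C)
    (hsep : SeparablePairwise h) (hμν : ∫ x, h x ∂μ = ∫ x, h x ∂ν) : μ.map h = ν.map h :=
  Measure.ext_of_map_inner fun w => by
    rw [Measure.map_map (by fun_prop) hm, Measure.map_map (by fun_prop) hm]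
    exact map_inner_eq_of_integral_eq hm hb hsep hμν w

end Separable

theorem stmt_16 {X : Type*} [MeasurableSpace X] [StandardBorelSpace X] {D : ℕ}
    (h : X → EuclideanSpace ℝ (Fin D)) (hm : Measurable h) (hinj : Function.Injective h)
    (C : ℝ) (hb : ∀ x, ‖h x‖ ≤ C)
    (hsep : ∀ μ ν : Measure X, IsProbabilityMeasure μ → IsProbabilityMeasure ν →
      μ ≠ ν → Separable h μ ν) :
    (∀ μ ν : Measure X, IsProbabilityMeasure μ → IsProbabilityMeasure ν →
      0 ≤ ‖(∫ x, h x ∂μ) - ∫ x, h x ∂ν‖) ∧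
    (∀ μ ν : Measure X, IsProbabilityMeasure μ → IsProbabilityMeasure ν →
      ‖(∫ x, h x ∂μ) - ∫ x, h x ∂ν‖ = ‖(∫ x, h x ∂ν) - ∫ x, h x ∂μ‖) ∧
    (∀ μ ν κ : Measure X, IsProbabilityMeasure μ → IsProbabilityMeasure ν →
      IsProbabilityMeasure κ →
      ‖(∫ x, h x ∂μ) - ∫ x, h x ∂ν‖ ≤
        ‖(∫ x, h x ∂μ) - ∫ x, h x ∂κ‖ + ‖(∫ x, h x ∂κ) - ∫ x, h x ∂ν‖) ∧
    (∀ μ ν : Measure X, IsProbabilityMeasure μ → IsProbabilityMeasure ν →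
      (‖(∫ x, h x ∂μ) - ∫ x, h x ∂ν‖ = 0 ↔ μ = ν)) := by
  refine ⟨fun μ ν _ _ => norm_nonneg _, fun μ ν _ _ => norm_sub_rev _ _,
    fun μ ν κ _ _ _ => norm_sub_le_norm_sub_add_norm_sub _ _ _, fun μ ν _ _ => ⟨fun h0 => ?_, ?_⟩⟩
  · exact (hm.measurableEmbedding hinj).map_injective
      (map_eq_of_integral_eq hm hb hsep (sub_eq_zero.1 (norm_eq_zero.1 h0)))
  · rintro rfl
    rw [sub_self, norm_zero]
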